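/- arXiv:1802.00476 — 7 statements merged into one kernel-verified Lean document; each statement's English description precedes it below -/
import Mathlib

section
/- For graphs G, H and any graph K, the lexicographic product satisfies α(G ⋉ H) = α(G) · α(H). -/
open SimpleGraph

/-- The lexicographic product of two simple graphs. -/
def lexProd {α β : Type*} (G : SimpleGraph α) (H : SimpleGraph β) :
    SimpleGraph (α × β) where
  Adj x y := G.Adj x.1 y.1 ∨ (x.1 = y.1 ∧ H.Adj x.2 y.2)
  symm := by
    refine ⟨?_⟩
    rintro ⟨u, a⟩ ⟨v, b⟩ (h | ⟨h1, h2⟩)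
    · exact Or.inl h.symm
    · exact Or.inr ⟨h1.symm, h2.symm⟩
  loopless := by refine ⟨?_⟩; rintro ⟨u, a⟩ (h | ⟨_, h⟩) <;> exact h.ne rfl

/-- The independence number of a graph on a finite vertex set. -/
noncomputable def indepNum {V : Type*} [Fintype V] (G : SimpleGraph V) : ℕ :=
  sSup {n : ℕ | ∃ s : Finset V,
    (∀ a ∈ s, ∀ b ∈ s, a ≠ b → ¬ G.Adj a b) ∧ s.card = n}

/-!
An independent set of `G ⋉ H` projects onto an independent set `A` of `G`, and each of its
fibres over a vertex of `A` projects injectively onto an independent set of `H`; hence it has at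
most `α(G) · α(H)` elements. Conversely, the product of independent sets of `G` and `H` is
independent in `G ⋉ H`.
-/

theorem indepNum_eq_simpleGraph_indepNum {V : Type*} [Fintype V] (G : SimpleGraph V) :
    _root_.indepNum G = G.indepNum := by
  unfold _root_.indepNum SimpleGraph.indepNum
  congr! 3 with n
  exact exists_congr fun s ↦ (isNIndepSet_iff G n s).symm

namespace SimpleGraph

open Finset

variable {α β : Type*} {G : SimpleGraph α} {H : SimpleGraph β}

theorem IsIndepSet.lexProd_prod {s : Set α} {t : Set β} (hs : G.IsIndepSet s)
    (ht : H.IsIndepSet t) : (lexProd G H).IsIndepSet (s ×ˢ t) := by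
  rintro ⟨u, a⟩ ⟨hu, ha⟩ ⟨v, b⟩ ⟨hv, hb⟩ hne (hadj | ⟨rfl, hadj⟩)
  · exact hs hu hv hadj.ne hadj
  · exact ht ha hb (fun hab ↦ hne (Prod.ext rfl hab)) hadj

theorem IsIndepSet.image_fst_of_lexProd {S : Set (α × β)} (hS : (lexProd G H).IsIndepSet S) :
    G.IsIndepSet (Prod.fst '' S) := by
  rintro _ ⟨x, hx, rfl⟩ _ ⟨y, hy, rfl⟩ hne hadj
  exact hS hx hy (fun hxy ↦ hne (congrArg Prod.fst hxy)) (Or.inl hadj)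

theorem IsIndepSet.image_snd_fiber_of_lexProd {S : Set (α × β)}
    (hS : (lexProd G H).IsIndepSet S) (u : α) :
    H.IsIndepSet (Prod.snd '' {x ∈ S | x.1 = u}) := by
  rintro _ ⟨x, ⟨hx, hxu⟩, rfl⟩ _ ⟨y, ⟨hy, hyu⟩, rfl⟩ hne hadj
  exact hS hx hy (fun hxy ↦ hne (congrArg Prod.snd hxy)) (Or.inr ⟨hxu.trans hyu.symm, hadj⟩)

theorem IsIndepSet.card_le_indepNum_mul_of_lexProd [Finite α] [Finite β] {S : Finset (α × β)}
    (hS : (lexProd G H).IsIndepSet S) : #S ≤ G.indepNum * H.indepNum := by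
  classical
  have fibre_le (u : α) : #{x ∈ S | x.1 = u} ≤ H.indepNum := by
    have hinj : Set.InjOn Prod.snd (↑{x ∈ S | x.1 = u} : Set (α × β)) := fun x hx y hy hxy ↦
      Prod.ext ((mem_filter.1 hx).2.trans (mem_filter.1 hy).2.symm) hxy
    rw [← card_image_of_injOn hinj]
    apply IsIndepSet.card_le_indepNum
    rw [coe_image, coe_filter]
    exact hS.image_snd_fiber_of_lexProd u
  have base_le : #(S.image Prod.fst) ≤ G.indepNum := by
    apply IsIndepSet.card_le_indepNum
    simpa only [coe_image] using hS.image_fst_of_lexProd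
  calc #S ≤ H.indepNum * #(S.image Prod.fst) := card_le_mul_card_image S _ fun u _ ↦ fibre_le u
    _ ≤ G.indepNum * H.indepNum := by rw [mul_comm]; exact Nat.mul_le_mul_right _ base_le

theorem indepNum_lexProd [Finite α] [Finite β] :
    (lexProd G H).indepNum = G.indepNum * H.indepNum := by
  obtain ⟨S, hS⟩ := (lexProd G H).exists_isNIndepSet_indepNum
  obtain ⟨s, hs⟩ := G.exists_isNIndepSet_indepNum
  obtain ⟨t, ht⟩ := H.exists_isNIndepSet_indepNum
  refine le_antisymm ?_ ?_
  · exact hS.card_eq ▸ hS.isIndepSet.card_le_indepNum_mul_of_lexProd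
  · rw [← hs.card_eq, ← ht.card_eq, ← card_product]
    apply IsIndepSet.card_le_indepNum
    rw [coe_product]
    exact hs.isIndepSet.lexProd_prod ht.isIndepSet

end SimpleGraph

theorem stmt2 {α β : Type*} [Fintype α] [Fintype β]
    (G : SimpleGraph α) (H : SimpleGraph β) :
    _root_.indepNum (lexProd G H) = _root_.indepNum G * _root_.indepNum H := by
  simp only [indepNum_eq_simpleGraph_indepNum]
  exact indepNum_lexProd
end

section
/- Let G be a finite graph and F a field. If M is a matrix in F^{V×V} fitting G (i.e., M_{vv} = 1 for all v ∈ V and M_{uv} = M_{vu} = 0 whenever uv ∉ E), then α(G) ≤ rank(M). -/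
open SimpleGraph Matrix

theorem Matrix.card_le_rank_of_submatrix_eq_one {m ι R : Type*} [Fintype m] [Fintype ι]
    [DecidableEq ι] [CommRing R] [StrongRankCondition R] (M : Matrix m m R) (f : ι → m)
    (h : M.submatrix f f = 1) : Fintype.card ι ≤ M.rank := by
  simpa [h, rank_one] using rank_submatrix_le M f f

theorem SimpleGraph.IsIndepSet.submatrix_eq_one {V F : Type*} [DecidableEq V] [Zero F] [One F]
    {G : SimpleGraph V} {M : Matrix V V F} (hdiag : ∀ v, M v v = 1)
    (hoff : ∀ u v, u ≠ v → ¬ G.Adj u v → M u v = 0) {s : Set V} (hs : G.IsIndepSet s) :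
    M.submatrix ((↑) : s → V) ((↑) : s → V) = 1 := by
  ext ⟨u, hu⟩ ⟨v, hv⟩
  by_cases huv : u = v
  · subst huv
    simp [hdiag]
  · simp [one_apply, huv, hoff u v huv (hs hu hv huv)]

theorem stmt4_general {V : Type*} [Fintype V] {F : Type*} [Field F]
    (G : SimpleGraph V) (M : Matrix V V F)
    (hdiag : ∀ v, M v v = 1)
    (hoff : ∀ u v, u ≠ v → ¬ G.Adj u v → M u v = 0 ∧ M v u = 0) :
    _root_.indepNum G ≤ M.rank := by
  classical
  refine csSup_le ⟨0, ∅, by simp, rfl⟩ ?_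
  rintro _ ⟨s, hs, rfl⟩
  have hindep : G.IsIndepSet (s : Set V) := fun u hu v hv huv ↦ hs u hu v hv huv
  have hid := hindep.submatrix_eq_one hdiag fun u v huv hadj ↦ (hoff u v huv hadj).1
  simpa using M.card_le_rank_of_submatrix_eq_one _ hid

theorem stmt4 {V : Type*} [Fintype V] [DecidableEq V] {F : Type*} [Field F]
    (G : SimpleGraph V) (M : Matrix V V F)
    (hdiag : ∀ v, M v v = 1)
    (hoff : ∀ u v, u ≠ v → ¬ G.Adj u v → M u v = 0 ∧ M v u = 0) :
    _root_.indepNum G ≤ M.rank :=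
  stmt4_general G M hdiag hoff
end

section
/- Let G be a finite graph, F a field, n, d positive integers with d ≤ n. Suppose each vertex v is assigned matrices A_v, B_v ∈ F^{n×d} such that A_vᵀ B_v = I_d for all v, and A_uᵀ B_v = A_vᵀ B_u = 0 whenever uv ∉ E (u ≠ v). Let X_v be the column space of A_v. If S, T ⊆ V are disjoint, S is an independent set, and there are no edges between S and T, then the subspaces Σ_{v∈S} X_v and Σ_{v∈T} X_v intersect trivially (are linearly independent). -/
/-!
For `u ∈ S` the map `x ↦ B_uᵀ x` is a left inverse of `A_u` and vanishes on `X_v` for every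
`v ≠ u` not adjacent to `u`. Writing `x ∈ Σ_{v ∈ S} X_v` as `Σ_v A_v c_v`, it therefore reads off
`B_uᵀ x = c_u`; if `x` also lies in `Σ_{v ∈ T} X_v`, then `B_uᵀ x = 0`, so every `c_u` vanishes
and `x = 0`. The rank identity then follows from `dim (U ⊔ W) + dim (U ⊓ W) = dim U + dim W`.
-/

open SimpleGraph Matrix

namespace Submodule

variable {R M W ι : Type*} [Ring R] [AddCommGroup M] [Module R M] [AddCommGroup W] [Module R W]

theorem exists_eq_sum_of_mem_iSup_range {s : Finset ι} {a : ι → W →ₗ[R] M} {x : M}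
    (hx : x ∈ ⨆ v ∈ s, LinearMap.range (a v)) : ∃ c : ι → W, x = ∑ v ∈ s, a v (c v) := by
  obtain ⟨μ, rfl⟩ := (mem_iSup_finset_iff_exists_sum _ x).mp hx
  choose c hc using fun v => LinearMap.mem_range.mp (μ v).2
  exact ⟨c, by simp only [hc]⟩

theorem iSup_range_le_ker {t : Finset ι} {a : ι → W →ₗ[R] M} {b : M →ₗ[R] W}
    (h : ∀ v ∈ t, b ∘ₗ a v = 0) : ⨆ v ∈ t, LinearMap.range (a v) ≤ LinearMap.ker b :=
  iSup₂_le fun v hv => LinearMap.range_le_ker_iff.mpr (h v hv)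

theorem eq_zero_of_mem_iSup_range_of_biorthogonal {s : Finset ι} {a : ι → W →ₗ[R] M}
    {b : ι → M →ₗ[R] W} (hself : ∀ u ∈ s, b u ∘ₗ a u = LinearMap.id)
    (hoff : ∀ u ∈ s, ∀ v ∈ s, u ≠ v → b u ∘ₗ a v = 0) {x : M}
    (hx : x ∈ ⨆ v ∈ s, LinearMap.range (a v)) (hb : ∀ u ∈ s, b u x = 0) : x = 0 := by
  obtain ⟨c, rfl⟩ := exists_eq_sum_of_mem_iSup_range hx
  have hcoeff : ∀ u ∈ s, b u (∑ v ∈ s, a v (c v)) = c u := by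
    intro u hu
    rw [map_sum, Finset.sum_eq_single_of_mem u hu fun v hv hvu => ?_]
    · exact LinearMap.congr_fun (hself u hu) (c u)
    · exact LinearMap.congr_fun (hoff u hu v hv hvu.symm) (c v)
  refine Finset.sum_eq_zero fun v hv => ?_
  have hcv := hcoeff v hv
  rw [hb v hv] at hcv
  rw [← hcv, map_zero]

theorem disjoint_iSup_range_of_biorthogonal {s t : Finset ι} {a : ι → W →ₗ[R] M}
    {b : ι → M →ₗ[R] W} (hself : ∀ u ∈ s, b u ∘ₗ a u = LinearMap.id)
    (hoff : ∀ u ∈ s, ∀ v ∈ s, u ≠ v → b u ∘ₗ a v = 0)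
    (hst : ∀ u ∈ s, ∀ v ∈ t, b u ∘ₗ a v = 0) :
    Disjoint (⨆ v ∈ s, LinearMap.range (a v)) (⨆ v ∈ t, LinearMap.range (a v)) := by
  refine disjoint_def.mpr fun x hxs hxt =>
    eq_zero_of_mem_iSup_range_of_biorthogonal hself hoff hxs fun u hu => ?_
  exact iSup_range_le_ker (hst u hu) hxt

end Submodule

theorem Matrix.transpose_mulVecLin_comp_mulVecLin {R m n k : Type*} [CommSemiring R] [Fintype m]
    [Fintype n] (A : Matrix m n R) (B : Matrix m k R) :
    Bᵀ.mulVecLin ∘ₗ A.mulVecLin = (Aᵀ * B)ᵀ.mulVecLin := by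
  rw [← mulVecLin_mul, transpose_mul, transpose_transpose]

theorem stmt7_general {V : Type*} {F : Type*} [Field F]
    (G : SimpleGraph V) (n d : ℕ)
    (A B : V → Matrix (Fin n) (Fin d) F)
    (hrep : ∀ v, (A v)ᵀ * B v = 1)
    (hoff : ∀ u v, u ≠ v → ¬ G.Adj u v →
      (A u)ᵀ * B v = 0 ∧ (A v)ᵀ * B u = 0)
    (X : V → Submodule F (Fin n → F))
    (hX : ∀ v, X v = LinearMap.range (A v).mulVecLin)
    (S T : Finset V) (hST : Disjoint S T)
    (hSindep : ∀ u ∈ S, ∀ v ∈ S, u ≠ v → ¬ G.Adj u v)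
    (hSTedge : ∀ u ∈ S, ∀ v ∈ T, ¬ G.Adj u v) :
    (⨆ v ∈ S, X v) ⊓ (⨆ v ∈ T, X v) = ⊥ ∧
    Module.finrank F ↥((⨆ v ∈ S, X v) ⊔ (⨆ v ∈ T, X v)) =
      Module.finrank F ↥(⨆ v ∈ S, X v) + Module.finrank F ↥(⨆ v ∈ T, X v) := by
  have hBA : ∀ u v, u ≠ v → ¬ G.Adj u v → (B u)ᵀ.mulVecLin ∘ₗ (A v).mulVecLin = 0 := by
    intro u v huv hadj
    rw [transpose_mulVecLin_comp_mulVecLin, (hoff u v huv hadj).2, transpose_zero, mulVecLin_zero]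
  have hinf : (⨆ v ∈ S, X v) ⊓ (⨆ v ∈ T, X v) = ⊥ := by
    simp only [hX]
    exact disjoint_iff.mp <| Submodule.disjoint_iSup_range_of_biorthogonal
      (b := fun u => (B u)ᵀ.mulVecLin)
      (fun u _ => by rw [transpose_mulVecLin_comp_mulVecLin, hrep, transpose_one, mulVecLin_one])
      (fun u hu v hv huv => hBA u v huv (hSindep u hu v hv huv))
      (fun u hu v hv => hBA u v (fun h => Finset.disjoint_left.mp hST hu (h ▸ hv))
        (hSTedge u hu v hv))
  refine ⟨hinf, ?_⟩
  have hdim := Submodule.finrank_sup_add_finrank_inf_eq (⨆ v ∈ S, X v) (⨆ v ∈ T, X v)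
  rw [hinf, finrank_bot] at hdim
  omega

theorem stmt7 {V : Type*} [Fintype V] [DecidableEq V] {F : Type*} [Field F]
    (G : SimpleGraph V) (n d : ℕ) (hdn : d ≤ n)
    (A B : V → Matrix (Fin n) (Fin d) F)
    (hrep : ∀ v, (A v)ᵀ * B v = 1)
    (hoff : ∀ u v, u ≠ v → ¬ G.Adj u v →
      (A u)ᵀ * B v = 0 ∧ (A v)ᵀ * B u = 0)
    (X : V → Submodule F (Fin n → F))
    (hX : ∀ v, X v = LinearMap.range (A v).mulVecLin)
    (S T : Finset V) (hST : Disjoint S T)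
    (hSindep : ∀ u ∈ S, ∀ v ∈ S, u ≠ v → ¬ G.Adj u v)
    (hSTedge : ∀ u ∈ S, ∀ v ∈ T, ¬ G.Adj u v) :
    (⨆ v ∈ S, X v) ⊓ (⨆ v ∈ T, X v) = ⊥ ∧
    Module.finrank F ↥((⨆ v ∈ S, X v) ⊔ (⨆ v ∈ T, X v)) =
      Module.finrank F ↥(⨆ v ∈ S, X v) + Module.finrank F ↥(⨆ v ∈ T, X v) :=
  stmt7_general G n d A B hrep hoff X hX S T hST hSindep hSTedge
end

section
/- Let p be a prime, F a field of characteristic p, and n a positive integer. Let M ∈ F^{[n] × binom([n], p+1)} be the incidence matrix with M_{i,X} = 1 if i ∈ X and 0 otherwise. Then the Gram matrix MᵀM fits the graph J_n^p over F (all diagonal entries equal 1 and (MᵀM)_{X,Y} = 0 whenever X ≠ Y are non-adjacent in J_n^p), and consequently the Haemers bound satisfies H(J_n^p; F) ≤ n. -/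
open Matrix

/-- The graph `J_n^p`: vertices are the `(p+1)`-subsets of `[n]`,
with `X ~ Y` iff `|X ∩ Y| ≢ 0 (mod p)`. -/
def Jgraph (n p : ℕ) : SimpleGraph {s : Finset (Fin n) // s.card = p + 1} where
  Adj X Y := X ≠ Y ∧ ¬ (p ∣ (X.1 ∩ Y.1).card)
  symm := by
    constructor
    rintro X Y ⟨hne, h⟩
    exact ⟨hne.symm, by rwa [Finset.inter_comm]⟩
  loopless := by
    constructor
    rintro X ⟨hne, _⟩; exact hne rfl

theorem Matrix.transpose_mul_self_apply_of_incidence {ι V R : Type*} [Fintype ι] [DecidableEq ι]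
    [NonAssocSemiring R] (s : V → Finset ι) (M : Matrix ι V R)
    (hM : ∀ i v, M i v = if i ∈ s v then 1 else 0) (v w : V) :
    (Mᵀ * M) v w = ((s v ∩ s w).card : R) := by
  simp only [mul_apply, transpose_apply, hM, ← ite_and, ← Finset.mem_inter, mul_ite, mul_one,
    mul_zero, Finset.sum_boole, Finset.filter_mem_eq_inter, Finset.univ_inter]
  rw [Finset.inter_comm]

theorem Jgraph.dvd_card_inter_of_not_adj {n p : ℕ} {X Y : {s : Finset (Fin n) // s.card = p + 1}}
    (hne : X ≠ Y) (hXY : ¬ (Jgraph n p).Adj X Y) : p ∣ (X.1 ∩ Y.1).card := by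
  by_contra h
  exact hXY ⟨hne, h⟩

theorem stmt12_general (p n : ℕ)
    {F : Type*} [Field F] [CharP F p]
    (M : Matrix (Fin n) {s : Finset (Fin n) // s.card = p + 1} F)
    (hM : ∀ i X, M i X = if i ∈ X.1 then 1 else 0) :
    (∀ X, (Mᵀ * M) X X = 1) ∧
    (∀ X Y, X ≠ Y → ¬ (Jgraph n p).Adj X Y → (Mᵀ * M) X Y = 0) ∧
    (Mᵀ * M).rank ≤ n := by
  have gram := transpose_mul_self_apply_of_incidence Subtype.val M hM
  refine ⟨fun X => ?_, fun X Y hne hXY => ?_, ?_⟩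
  · rw [gram, Finset.inter_self, X.2, Nat.cast_succ, CharP.cast_eq_zero, zero_add]
  · rw [gram, CharP.cast_eq_zero_iff F p]
    exact Jgraph.dvd_card_inter_of_not_adj hne hXY
  · calc (Mᵀ * M).rank ≤ M.rank := rank_mul_le_right _ _
      _ ≤ n := (rank_le_card_height M).trans_eq (Fintype.card_fin n)

theorem stmt12 (p n : ℕ) (hp : p.Prime) (hn : 0 < n)
    {F : Type*} [Field F] [CharP F p]
    (M : Matrix (Fin n) {s : Finset (Fin n) // s.card = p + 1} F)
    (hM : ∀ i X, M i X = if i ∈ X.1 then 1 else 0) :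
    (∀ X, (Mᵀ * M) X X = 1) ∧
    (∀ X Y, X ≠ Y → ¬ (Jgraph n p).Adj X Y → (Mᵀ * M) X Y = 0) ∧
    (Mᵀ * M).rank ≤ n :=
  stmt12_general p n M hM
end

section
/- Let G and H be finite graphs. If there is a graph homomorphism from the complement of G to the complement of H, and H admits a d-representation of rank r over a field F, then G admits a d-representation of rank at most r over F. Consequently, the fractional Haemers bound satisfies H_f(G; F) ≤ H_f(H; F). -/
/-!
A representation of `H` pulls back along `φ : Gᶜ →g Hᶜ` to `M'_{uv} = M_{φ u, φ v}`: non-adjacent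
distinct vertices of `G` go to non-adjacent distinct vertices of `H`, so the zero blocks survive.
Since `M'` is a submatrix of `M`, its rank is at most that of `M`.
-/

open SimpleGraph Matrix

/-- `M` is a `d`-representation of `G` over `F`: each diagonal block is the
identity and both off-diagonal blocks vanish on non-adjacent pairs. -/
def IsDRep {V : Type*} (F : Type*) [Field F] (G : SimpleGraph V) (d : ℕ)
    (M : Matrix (V × Fin d) (V × Fin d) F) : Prop :=
  (∀ v i j, M (v, i) (v, j) = if i = j then 1 else 0) ∧
  (∀ u v, u ≠ v → ¬ G.Adj u v → ∀ i j, M (u, i) (v, j) = 0)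

/-- The fractional Haemers bound of `G` over `F`. -/
noncomputable def fracHaemers {V : Type*} [Fintype V] (F : Type*) [Field F]
    (G : SimpleGraph V) : ℝ :=
  sInf {x : ℝ | ∃ d : ℕ, 0 < d ∧ ∃ M : Matrix (V × Fin d) (V × Fin d) F,
    IsDRep F G d M ∧ x = (M.rank : ℝ) / d}

namespace IsDRep

variable {V W F : Type*} [Field F] {G : SimpleGraph V} {H : SimpleGraph W} {d : ℕ}

theorem one [DecidableEq V] : IsDRep F G d 1 :=
  ⟨fun v i j => by simp [one_apply], fun u v huv _ i j => by simp [one_apply, huv]⟩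

theorem comap (φ : Gᶜ →g Hᶜ) {M : Matrix (W × Fin d) (W × Fin d) F} (hM : IsDRep F H d M) :
    IsDRep F G d (M.submatrix (Prod.map φ id) (Prod.map φ id)) := by
  refine ⟨fun v => hM.1 (φ v), fun u v huv hGuv => ?_⟩
  obtain ⟨hφuv, hHφuv⟩ := compl_adj H _ _ |>.mp <| φ.map_adj <| (compl_adj G u v).mpr ⟨huv, hGuv⟩
  exact hM.2 _ _ hφuv hHφuv

end IsDRep

theorem fracHaemers_le_of_hom {V W F : Type*} [Fintype V] [Fintype W] [Field F]
    {G : SimpleGraph V} {H : SimpleGraph W} (φ : Gᶜ →g Hᶜ) :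
    fracHaemers F G ≤ fracHaemers F H := by
  classical
  refine le_csInf ⟨_, 1, one_pos, 1, IsDRep.one, rfl⟩ ?_
  rintro _ ⟨d, hd, M, hM, rfl⟩
  have hbdd : BddBelow {x : ℝ | ∃ d : ℕ, 0 < d ∧ ∃ M : Matrix (V × Fin d) (V × Fin d) F,
      IsDRep F G d M ∧ x = (M.rank : ℝ) / d} :=
    ⟨0, by rintro _ ⟨e, -, P, -, rfl⟩; positivity⟩
  refine (csInf_le hbdd ⟨d, hd, _, hM.comap φ, rfl⟩).trans ?_
  gcongr
  exact rank_submatrix_le M _ _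

theorem stmt15_general {α β : Type*} [Fintype α] [Fintype β]
    {F : Type*} [Field F]
    (G : SimpleGraph α) (H : SimpleGraph β) (φ : Gᶜ →g Hᶜ)
    (d : ℕ) (r : ℕ)
    (M : Matrix (β × Fin d) (β × Fin d) F) (hM : IsDRep F H d M)
    (hr : M.rank = r) :
    (∃ M' : Matrix (α × Fin d) (α × Fin d) F,
      IsDRep F G d M' ∧ M'.rank ≤ r) ∧
    fracHaemers F G ≤ fracHaemers F H :=
  ⟨⟨_, hM.comap φ, hr ▸ rank_submatrix_le M _ _⟩, fracHaemers_le_of_hom φ⟩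

theorem stmt15 {α β : Type*} [Fintype α] [Fintype β] [DecidableEq α] [DecidableEq β]
    {F : Type*} [Field F]
    (G : SimpleGraph α) (H : SimpleGraph β) (φ : Gᶜ →g Hᶜ)
    (d : ℕ) (hd : 0 < d) (r : ℕ)
    (M : Matrix (β × Fin d) (β × Fin d) F) (hM : IsDRep F H d M)
    (hr : M.rank = r) :
    (∃ M' : Matrix (α × Fin d) (α × Fin d) F,
      IsDRep F G d M' ∧ M'.rank ≤ r) ∧
    fracHaemers F G ≤ fracHaemers F H :=
  stmt15_general G H φ d r M hM hr
end

section
/- Let G be a finite graph admitting a d-dimensional orthogonal subspace representation over R^N: subspaces S_v ≤ R^N with dim S_v = d for all v and S_u ⊥ S_v whenever uv ∉ E (u ≠ v). Then the Lovász theta function satisfies θ(G) ≤ N/d. -/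
open SimpleGraph

/-- The Lovász theta function of `G`, in its dual form. -/
noncomputable def lovaszTheta {V : Type*} [Fintype V] (G : SimpleGraph V) : ℝ :=
  sSup {x : ℝ | ∃ (N : ℕ) (f : V → EuclideanSpace ℝ (Fin N))
      (h : EuclideanSpace ℝ (Fin N)),
    ‖h‖ = 1 ∧ (∀ v, ‖f v‖ = 1) ∧
    (∀ u v : V, G.Adj u v → (inner ℝ (f u) (f v) : ℝ) = 0) ∧
    x = ∑ v, (inner ℝ (f v) h : ℝ) ^ 2}

/-!
Take a unit vector `h` and unit vectors `f v` in `ℝ^M` with `f u ⟂ f v` for adjacent `u, v`.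
If `e v k` is an orthonormal basis of `S v`, the vectors `e v k ⊗ f v` are orthonormal in
`ℝ^N ⊗ ℝ^M`: for `u ≠ v` either `S u ⟂ S v` or `f u ⟂ f v`. Bessel's inequality against `b i ⊗ h`
for an orthonormal basis `b` of `ℝ^N`, summed over `i`, then gives `d * ∑ v, ⟪f v, h⟫ ^ 2 ≤ N`.
-/

open scoped TensorProduct RealInnerProductSpace

section TensorOrthonormal

variable {E F : Type*} [NormedAddCommGroup E] [InnerProductSpace ℝ E]
  [NormedAddCommGroup F] [InnerProductSpace ℝ F]

theorem orthonormal_sigma_tmul {V : Type*} {ι : V → Type*} (e : (v : V) → ι v → E) (f : V → F)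
    (he : ∀ v, Orthonormal ℝ (e v)) (hf : ∀ v, ‖f v‖ = 1)
    (horth : Pairwise fun u v => (∀ j k, ⟪e u j, e v k⟫ = 0) ∨ ⟪f u, f v⟫ = 0) :
    Orthonormal ℝ fun p : Σ v, ι v => e p.1 p.2 ⊗ₜ[ℝ] f p.1 := by
  classical
  rw [orthonormal_iff_ite]
  rintro ⟨u, j⟩ ⟨v, k⟩
  rw [TensorProduct.inner_tmul]
  obtain rfl | huv := eq_or_ne u v
  · rw [orthonormal_iff_ite.mp (he u), real_inner_self_eq_norm_sq, hf u]
    simp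
  · rw [if_neg (fun h => huv (Sigma.mk.inj_iff.mp h).1)]
    rcases horth huv with hS | hf0
    · rw [hS, zero_mul]
    · rw [hf0, mul_zero]

/-- Bessel's inequality against the vectors `b i ⊗ h`, `b` an orthonormal basis of `E`, summed
over `i` and combined with Parseval's identity `∑ i, ⟪e p, b i⟫ ^ 2 = ‖e p‖ ^ 2`. -/
theorem Orthonormal.sum_norm_sq_mul_inner_sq_le [FiniteDimensional ℝ E] {κ : Type*} [Fintype κ]
    {e : κ → E} {f : κ → F} (hef : Orthonormal ℝ fun p => e p ⊗ₜ[ℝ] f p) (h : F) :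
    ∑ p, ‖e p‖ ^ 2 * ⟪f p, h⟫ ^ 2 ≤ Module.finrank ℝ E * ‖h‖ ^ 2 := by
  let b := stdOrthonormalBasis ℝ E
  have bessel (i) : ∑ p, ⟪e p ⊗ₜ[ℝ] f p, b i ⊗ₜ[ℝ] h⟫ ^ 2 ≤ ‖h‖ ^ 2 := by
    simpa only [Real.norm_eq_abs, sq_abs, TensorProduct.norm_tmul, b.orthonormal.1 i, one_mul]
      using hef.sum_inner_products_le (s := Finset.univ) (b i ⊗ₜ[ℝ] h)
  calc ∑ p, ‖e p‖ ^ 2 * ⟪f p, h⟫ ^ 2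
      = ∑ i, ∑ p, ⟪e p ⊗ₜ[ℝ] f p, b i ⊗ₜ[ℝ] h⟫ ^ 2 := by
        simp_rw [← b.sum_sq_inner_left, Finset.sum_mul, TensorProduct.inner_tmul, mul_pow]
        exact Finset.sum_comm
    _ ≤ ∑ _i, ‖h‖ ^ 2 := Finset.sum_le_sum fun i _ => bessel i
    _ = Module.finrank ℝ E * ‖h‖ ^ 2 := by simp

theorem sum_finrank_mul_inner_sq_le [FiniteDimensional ℝ E] {V : Type*} [Fintype V]
    (S : V → Submodule ℝ E) (f : V → F) (hf : ∀ v, ‖f v‖ = 1)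
    (horth : Pairwise fun u v => S u ⟂ S v ∨ ⟪f u, f v⟫ = 0) (h : F) :
    ∑ v, Module.finrank ℝ (S v) * ⟪f v, h⟫ ^ 2 ≤ Module.finrank ℝ E * ‖h‖ ^ 2 := by
  let b v := stdOrthonormalBasis ℝ (S v)
  let e v k : E := b v k
  have he (v) : Orthonormal ℝ (e v) := (b v).orthonormal.comp_linearIsometry (S v).subtypeₗᵢ
  have hef := orthonormal_sigma_tmul e f he hf fun u v huv =>
    (horth huv).imp_left fun hS j k => Submodule.isOrtho_iff_inner_eq.mp hS _ (b u j).2 _ (b v k).2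
  simpa [Fintype.sum_sigma, (he _).1] using hef.sum_norm_sq_mul_inner_sq_le h

end TensorOrthonormal

theorem stmt18 {V : Type*} [Fintype V] (G : SimpleGraph V)
    (N d : ℕ) (hd : 0 < d)
    (S : V → Submodule ℝ (EuclideanSpace ℝ (Fin N)))
    (hdim : ∀ v, Module.finrank ℝ ↥(S v) = d)
    (horth : ∀ u v : V, u ≠ v → ¬ G.Adj u v →
      ∀ x ∈ S u, ∀ y ∈ S v, (inner ℝ x y : ℝ) = 0) :
    lovaszTheta G ≤ (N : ℝ) / d := by
  refine Real.sSup_le ?_ (by positivity)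
  rintro _ ⟨M, f, h, hh, hf, hadj, rfl⟩
  have hrep : Pairwise fun u v => S u ⟂ S v ∨ ⟪f u, f v⟫ = 0 := fun u v huv => by
    by_cases huv' : G.Adj u v
    · exact .inr (hadj u v huv')
    · exact .inl (Submodule.isOrtho_iff_inner_eq.mpr (horth u v huv huv'))
  have key := sum_finrank_mul_inner_sq_le S f hf hrep h
  simp only [hdim, hh, finrank_euclideanSpace_fin, ← Finset.mul_sum] at key
  rw [le_div_iff₀ (by positivity)]
  linarith
end

section
/- Let G be a finite graph, F a field, and suppose each vertex v is assigned (P_v, x_v) where P_v ∈ F[x_1,…,x_n] and x_v ∈ F^n, such that P_v(x_v) ≠ 0 for all v and P_u(x_v) = P_v(x_u) = 0 whenever uv ∉ E (u ≠ v). Then there exists a matrix fitting G over F of rank at most dim span_F{P_v : v ∈ V}; in particular the Haemers bound satisfies H(G; F) ≤ dim span_F{P_v : v ∈ V}. -/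
open MvPolynomial Matrix

theorem Matrix.rank_of_apply_le_finrank_span {F W ι κ : Type*} [Field F] [AddCommGroup W]
    [Module F W] [Finite ι] [Fintype κ] (w : ι → W) (e : κ → W →ₗ[F] F) :
    (Matrix.of fun i j => e j (w i)).rank ≤ Module.finrank F (Submodule.span F (Set.range w)) := by
  have : FiniteDimensional F (Submodule.span F (Set.range w)) :=
    FiniteDimensional.span_of_finite F (Set.finite_range w)
  have hrows : Set.range (Matrix.of fun i j => e j (w i)).row = LinearMap.pi e '' Set.range w := by
    rw [← Set.range_comp]
    rfl
  rw [rank_eq_finrank_span_row, hrows, ← Submodule.map_span]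
  exact Submodule.finrank_map_le _ _

theorem stmt19_general {V : Type*} [Fintype V] {F : Type*} [Field F]
    (G : SimpleGraph V) (n : ℕ)
    (P : V → MvPolynomial (Fin n) F) (x : V → (Fin n → F))
    (hnz : ∀ v, MvPolynomial.eval (x v) (P v) ≠ 0)
    (hzero : ∀ u v : V, u ≠ v → ¬ G.Adj u v →
      MvPolynomial.eval (x v) (P u) = 0 ∧ MvPolynomial.eval (x u) (P v) = 0) :
    ∃ M : Matrix V V F,
      (∀ v, M v v = 1) ∧
      (∀ u v : V, u ≠ v → ¬ G.Adj u v → M u v = 0 ∧ M v u = 0) ∧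
      M.rank ≤ Module.finrank F ↥(Submodule.span F (Set.range P)) := by
  set Q : V → MvPolynomial (Fin n) F := fun v => (eval (x v) (P v))⁻¹ • P v
  have hQ_mem : ∀ v, Q v ∈ Submodule.span F (Set.range P) := fun v =>
    Submodule.smul_mem _ _ (Submodule.subset_span ⟨v, rfl⟩)
  have : FiniteDimensional F (Submodule.span F (Set.range P)) :=
    FiniteDimensional.span_of_finite F (Set.finite_range P)
  refine ⟨Matrix.of fun u v => (aeval (x v)).toLinearMap (Q u), fun v => ?_,
    fun u v huv hadj => ?_, ?_⟩
  · simp [Q, inv_mul_cancel₀ (hnz v)]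
  · simp [Q, hzero u v huv hadj]
  · calc _ ≤ Module.finrank F (Submodule.span F (Set.range Q)) :=
          rank_of_apply_le_finrank_span Q _
      _ ≤ _ := Submodule.finrank_mono (Submodule.span_le.mpr (Set.range_subset_iff.mpr hQ_mem))

theorem stmt19 {V : Type*} [Fintype V] [DecidableEq V] {F : Type*} [Field F]
    (G : SimpleGraph V) (n : ℕ)
    (P : V → MvPolynomial (Fin n) F) (x : V → (Fin n → F))
    (hnz : ∀ v, MvPolynomial.eval (x v) (P v) ≠ 0)
    (hzero : ∀ u v : V, u ≠ v → ¬ G.Adj u v →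
      MvPolynomial.eval (x v) (P u) = 0 ∧ MvPolynomial.eval (x u) (P v) = 0) :
    ∃ M : Matrix V V F,
      (∀ v, M v v = 1) ∧
      (∀ u v : V, u ≠ v → ¬ G.Adj u v → M u v = 0 ∧ M v u = 0) ∧
      M.rank ≤ Module.finrank F ↥(Submodule.span F (Set.range P)) :=
  stmt19_general G n P x hnz hzero
end
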